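/- arXiv:math/0603540 — 5 statements merged into one kernel-verified Lean document; each statement's English description precedes it below -/
import Mathlib

section
/- If a set of reals A is κ-Universally Baire (i.e., for every continuous f : κ^ω → ω^ω there is a dense set of p ∈ κ^{<ω} such that f⁻¹(A) is meager or comeager below p), then A is weakly κ-Universally Baire (i.e., for every continuous f : κ^ω → ω^ω there is a dense set of p ∈ κ^{<ω} such that either f⁻¹(A) ∩ σ^ω is meager below p in σ^ω for a club of σ ∈ [κ]^ω, or comeager below p in σ^ω for a club of σ ∈ [κ]^ω). -/
open Set

/-- The basic open set of sequences in `κ^ω` extending the finite sequence `p ∈ κ^{<ω}`. -/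
def Np {κ : Type*} (p : List κ) : Set (ℕ → κ) :=
  {x | ∀ i : Fin p.length, x i.1 = p.get i}

/-- `D ⊆ κ^{<ω}` is dense: every condition has an extension in `D`. -/
def DenseCond {κ : Type*} (D : Set (List κ)) : Prop :=
  ∀ p : List κ, ∃ q ∈ D, p <+: q

/-- The subspace `σ^ω ⊆ κ^ω` of sequences with all values in `σ`. -/
abbrev SeqIn {κ : Type*} (σ : Set κ) : Type _ := {x : ℕ → κ // ∀ n, x n ∈ σ}

/-- `B ∩ σ^ω` is meager below `p` in the space `σ^ω`. -/
def MeagerBelowIn {κ : Type*} [TopologicalSpace κ] (σ : Set κ) (B : Set (ℕ → κ))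
    (p : List κ) : Prop :=
  IsMeagre (Subtype.val ⁻¹' (B ∩ Np p) : Set (SeqIn σ))

/-- `B ∩ σ^ω` is comeager below `p` in the space `σ^ω`. -/
def ComeagerBelowIn {κ : Type*} [TopologicalSpace κ] (σ : Set κ) (B : Set (ℕ → κ))
    (p : List κ) : Prop :=
  IsMeagre (Subtype.val ⁻¹' (Np p \ B) : Set (SeqIn σ))

/-- `C` is a club in `[κ]^ω`: a collection of countable subsets of `κ` which is cofinal
under inclusion and closed under unions of increasing `ω`-chains. -/
def IsClubIn {κ : Type*} (C : Set (Set κ)) : Prop :=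
  (∀ σ ∈ C, σ.Countable) ∧
  (∀ a : Set κ, a.Countable → ∃ σ ∈ C, a ⊆ σ) ∧
  (∀ s : ℕ → Set κ, (∀ n, s n ∈ C) → Monotone s → (⋃ n, s n) ∈ C)

/-!
A meagre set `M ⊆ κ^ω` lies outside countably many dense open sets `U`, and player II wins the
Banach–Mazur game into each `U` by a strategy `e_U` sending any condition to an extension whose
basic open set lies inside `U`. The countable `σ` closed under all the `e_U` form a club, and for
such `σ` the traces `U ∩ σ^ω` are still dense open in `σ^ω`: an extension of a condition with
values in `σ` again has values in `σ`, and can be completed to a point of `σ^ω` inside `U`. Hence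
`M ∩ σ^ω` is meagre in `σ^ω`, and the theorem follows by applying this below each condition
where `f ⁻¹' A` is meagre or comeagre.
-/

open Filter PiNat

section Cylinders

variable {κ : Type*}

theorem Np_subset_of_prefix {p q : List κ} (h : p <+: q) : Np q ⊆ Np p := by
  intro x hx i
  rw [hx ⟨i.1, i.2.trans_le h.length_le⟩]
  simp only [List.get_eq_getElem]
  exact (h.getElem i.2).symm

theorem Np_ofFn (x : ℕ → κ) (n : ℕ) : Np (List.ofFn fun i : Fin n => x i) = cylinder x n := by
  ext y
  simp only [Np, List.get_eq_getElem, List.getElem_ofFn, mem_ofPred_eq, mem_cylinder_iff]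
  exact ⟨fun h i hi => h ⟨i, by simpa using hi⟩, fun h i => h i (by simpa using i.2)⟩

theorem prefix_ofFn_of_mem_Np {x : ℕ → κ} {p : List κ} (hx : x ∈ Np p) {n : ℕ}
    (hn : p.length ≤ n) : p <+: List.ofFn fun i : Fin n => x i := by
  rw [List.prefix_iff_eq_take]
  refine List.ext_getElem (by simp [hn]) fun i h₁ _ => ?_
  simpa using (hx ⟨i, h₁⟩).symm

theorem getD_mem_Np (t : List κ) (x : ℕ → κ) : (fun i => t.getD i (x i)) ∈ Np t := fun i => by
  simp

theorem getD_mem_of_forall_mem {t : List κ} {σ : Set κ} (ht : ∀ a ∈ t, a ∈ σ) {d : κ} (hd : d ∈ σ)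
    (i : ℕ) : t.getD i d ∈ σ := by
  rw [List.getD_eq_getElem?_getD]
  cases hi : t[i]? with
  | none => exact hd
  | some a => exact ht a (List.mem_of_getElem? hi)

variable [TopologicalSpace κ] [DiscreteTopology κ]

theorem isOpen_Np (p : List κ) : IsOpen (Np p) := by
  have : Np p = ⋂ i : Fin p.length, (fun x : ℕ → κ => x i) ⁻¹' {p.get i} := by
    ext x; simp [Np]
  rw [this]
  exact isOpen_iInter_of_finite fun i => (continuous_apply _).isOpen_preimage _ (isOpen_discrete _)

theorem eventually_cylinder_subset {U : Set (ℕ → κ)} (hU : IsOpen U) {x : ℕ → κ} (hx : x ∈ U) :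
    ∀ᶠ n in atTop, cylinder x n ⊆ U := by
  obtain ⟨_, ⟨y, n, rfl⟩, hxy, hyU⟩ :=
    (isTopologicalBasis_cylinders fun _ => κ).exists_subset_of_mem_open hx hU
  rw [← mem_cylinder_iff_eq.mp hxy] at hyU
  exact eventually_atTop.mpr ⟨n, fun m hm => (cylinder_anti x hm).trans hyU⟩

/-- The Banach–Mazur move of player II into a dense open set. -/
theorem Dense.exists_prefix_Np_subset {U : Set (ℕ → κ)} (hd : Dense U) (hU : IsOpen U)
    (s : List κ) : ∃ t, s <+: t ∧ Np t ⊆ U := by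
  rcases (Np s).eq_empty_or_nonempty with h | h
  · exact ⟨s, List.prefix_refl s, h ▸ empty_subset U⟩
  obtain ⟨x, hxs, hxU⟩ := hd.inter_open_nonempty _ (isOpen_Np s) h
  obtain ⟨n, hsub, hn⟩ :=
    ((eventually_cylinder_subset hU hxU).and (eventually_ge_atTop s.length)).exists
  exact ⟨_, prefix_ofFn_of_mem_Np hxs hn, (Np_ofFn x n).trans_subset hsub⟩

theorem dense_preimage_val_of_exists_prefix {σ : Set κ} {U : Set (ℕ → κ)}
    (h : ∀ s : List κ, (∀ a ∈ s, a ∈ σ) → ∃ t, s <+: t ∧ (∀ a ∈ t, a ∈ σ) ∧ Np t ⊆ U) :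
    Dense (Subtype.val ⁻¹' U : Set (SeqIn σ)) := by
  rw [dense_iff_inter_open]
  rintro V hV ⟨x, hxV⟩
  obtain ⟨W, hW, rfl⟩ := isOpen_induced_iff.mp hV
  obtain ⟨n, hn⟩ := (eventually_cylinder_subset hW hxV).exists
  obtain ⟨t, hst, htσ, htU⟩ := h (List.ofFn fun i : Fin n => x.1 i) (by simp [x.2])
  let y : SeqIn σ := ⟨fun i => t.getD i (x.1 i), fun i => getD_mem_of_forall_mem htσ (x.2 i) i⟩
  have hy : y.1 ∈ Np t := getD_mem_Np t x.1
  exact ⟨y, hn (Np_ofFn x.1 n ▸ Np_subset_of_prefix hst hy), htU hy⟩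

end Cylinders

section Club

variable {κ ι : Type*}

def ClosedUnder (e : ι → List κ → List κ) (σ : Set κ) : Prop :=
  ∀ i s, (∀ a ∈ s, a ∈ σ) → ∀ a ∈ e i s, a ∈ σ

theorem Monotone.exists_forall_mem_of_forall_mem_iUnion {s : ℕ → Set κ} (hs : Monotone s)
    {l : List κ} (hl : ∀ a ∈ l, a ∈ ⋃ n, s n) : ∃ n, ∀ a ∈ l, a ∈ s n := by
  classical
  obtain ⟨n, hn⟩ := hs.directed_le.exists_mem_subset_of_finset_subset_biUnion
    (s := l.toFinset) (by simpa [subset_def] using hl)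
  exact ⟨n, by simpa [subset_def] using hn⟩

theorem ClosedUnder.iUnion_of_monotone {e : ι → List κ → List κ} {s : ℕ → Set κ}
    (he : ∀ n, ClosedUnder e (s n)) (hs : Monotone s) : ClosedUnder e (⋃ n, s n) := by
  intro i l hl a ha
  obtain ⟨n, hn⟩ := hs.exists_forall_mem_of_forall_mem_iUnion hl
  exact mem_iUnion.mpr ⟨n, he n i l hn a ha⟩

def closureStep (e : ι → List κ → List κ) (τ : Set κ) : Set κ :=
  τ ∪ ⋃ i, ⋃ l : List τ, {a | a ∈ e i (l.map (↑))}

theorem Set.Countable.closureStep [Countable ι] (e : ι → List κ → List κ) {τ : Set κ}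
    (hτ : τ.Countable) : (closureStep e τ).Countable := by
  have := hτ.to_subtype
  exact hτ.union <| countable_iUnion fun i => countable_iUnion fun l =>
    (e i _).finite_toSet.countable

theorem closedUnder_iUnion_iterate_closureStep (e : ι → List κ → List κ) (a : Set κ) :
    ClosedUnder e (⋃ k, (closureStep e)^[k] a) := by
  have hsucc k : (closureStep e)^[k + 1] a = closureStep e ((closureStep e)^[k] a) :=
    Function.iterate_succ_apply' _ k a
  have hmono : Monotone fun k => (closureStep e)^[k] a :=
    monotone_nat_of_le_succ fun k => hsucc k ▸ subset_union_left
  intro i l hl b hb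
  obtain ⟨m, hm⟩ := hmono.exists_forall_mem_of_forall_mem_iUnion hl
  lift l to List ((closureStep e)^[m] a) using hm
  exact mem_iUnion.mpr ⟨m + 1, hsucc m ▸ Or.inr (mem_iUnion₂.mpr ⟨i, l, hb⟩)⟩

theorem isClubIn_setOf_closedUnder [Countable ι] (e : ι → List κ → List κ) :
    IsClubIn {σ | σ.Countable ∧ ClosedUnder e σ} := by
  refine ⟨fun σ hσ => hσ.1, fun a ha => ?_, fun s hs hmono => ?_⟩
  · have hcount k : ((closureStep e)^[k] a).Countable := by
      induction k with
      | zero => exact ha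
      | succ k ih => exact Function.iterate_succ_apply' (closureStep e) k a ▸ ih.closureStep e
    exact ⟨_, ⟨countable_iUnion hcount, closedUnder_iUnion_iterate_closureStep e a⟩,
      subset_iUnion (fun k => (closureStep e)^[k] a) 0⟩
  · exact ⟨countable_iUnion fun n => (hs n).1,
      ClosedUnder.iUnion_of_monotone (fun n => (hs n).2) hmono⟩

end Club

theorem IsMeagre.exists_isClubIn_isMeagre_preimage_val {κ : Type*} [TopologicalSpace κ]
    [DiscreteTopology κ] {M : Set (ℕ → κ)} (hM : IsMeagre M) :
    ∃ C : Set (Set κ), IsClubIn C ∧ ∀ σ ∈ C, IsMeagre (Subtype.val ⁻¹' M : Set (SeqIn σ)) := by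
  obtain ⟨S, hSo, hSd, hSc, hSM⟩ := mem_residual_iff.mp hM
  have := hSc.to_subtype
  choose e he using fun U : S => (hSd U U.2).exists_prefix_Np_subset (hSo U U.2)
  refine ⟨_, isClubIn_setOf_closedUnder e, fun σ ⟨_, hσ⟩ => ?_⟩
  rw [IsMeagre, ← preimage_compl, mem_residual_iff]
  refine ⟨preimage Subtype.val '' S, ?_, ?_, hSc.image _, ?_⟩
  · rintro _ ⟨U, hU, rfl⟩
    exact (hSo U hU).preimage continuous_subtype_val
  · rintro _ ⟨U, hU, rfl⟩
    exact dense_preimage_val_of_exists_prefix fun s hs =>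
      ⟨e ⟨U, hU⟩ s, (he _ s).1, hσ _ s hs, (he _ s).2⟩
  · rw [sInter_image]
    exact fun x hx => hSM (mem_sInter.mpr fun U hU => mem_iInter₂.mp hx U hU)

theorem fullUB_implies_weakUB_general (κ : Type*) [TopologicalSpace κ]
    [DiscreteTopology κ] (A : Set (ℕ → ℕ))
    (hUB : ∀ f : (ℕ → κ) → (ℕ → ℕ), Continuous f →
      DenseCond {p : List κ | IsMeagre (f ⁻¹' A ∩ Np p) ∨ IsMeagre (Np p \ f ⁻¹' A)}) :
    ∀ f : (ℕ → κ) → (ℕ → ℕ), Continuous f →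
      DenseCond {p : List κ |
        (∃ C : Set (Set κ), IsClubIn C ∧ ∀ σ ∈ C, MeagerBelowIn σ (f ⁻¹' A) p) ∨
        (∃ C : Set (Set κ), IsClubIn C ∧ ∀ σ ∈ C, ComeagerBelowIn σ (f ⁻¹' A) p)} := by
  intro f hf p
  obtain ⟨q, hq, hpq⟩ := hUB f hf p
  exact ⟨q, hq.imp (·.exists_isClubIn_isMeagre_preimage_val)
    (·.exists_isClubIn_isMeagre_preimage_val), hpq⟩

/-- If `A` is `κ`-Universally Baire (for every continuous `f : κ^ω → ω^ω` there is a dense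
set of conditions below which `f ⁻¹' A` is meager or comeager), then `A` is weakly
`κ`-Universally Baire (for every continuous `f` there is a dense set of conditions `p` such
that `f ⁻¹' A ∩ σ^ω` is meager below `p` in `σ^ω` for a club of countable `σ`, or comeager
below `p` in `σ^ω` for a club of countable `σ`). -/
theorem fullUB_implies_weakUB (κ : Type*) [Infinite κ] [TopologicalSpace κ]
    [DiscreteTopology κ] (A : Set (ℕ → ℕ))
    (hUB : ∀ f : (ℕ → κ) → (ℕ → ℕ), Continuous f →
      DenseCond {p : List κ | IsMeagre (f ⁻¹' A ∩ Np p) ∨ IsMeagre (Np p \ f ⁻¹' A)}) :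
    ∀ f : (ℕ → κ) → (ℕ → ℕ), Continuous f →
      DenseCond {p : List κ |
        (∃ C : Set (Set κ), IsClubIn C ∧ ∀ σ ∈ C, MeagerBelowIn σ (f ⁻¹' A) p) ∨
        (∃ C : Set (Set κ), IsClubIn C ∧ ∀ σ ∈ C, ComeagerBelowIn σ (f ⁻¹' A) p)} :=
  fullUB_implies_weakUB_general κ A hUB
end

section
/- Let κ be an infinite cardinal, σ ⊆ κ countable, and suppose B ⊆ κ^ω is comeager below p ∈ σ^{<ω} in κ^ω, witnessed by a sequence of dense open sets each determined by a dense set of conditions in σ^{<ω}. Then B ∩ σ^ω is comeager below p in the space σ^ω. -/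
/-!
For each `n` the sequences of `σ^ω` having an initial segment in `D n` form an open set, and it is
dense in `σ^ω` because `D n` is dense in `σ^{<ω}`: any cylinder of `σ^ω` around `y` is met by the
sequence that runs through an extension `r ∈ D n ∩ σ^{<ω}` of an initial segment of `y` and then
continues as `y`. The countably many dense open sets intersect in a comeager subset of `σ^ω`,
and by the witnessing hypothesis this intersection misses `N_p \ B`.
-/

open Set

/-- The initial segment `x↾k` of `x ∈ κ^ω`. -/
def seg {κ : Type*} (x : ℕ → κ) (n : ℕ) : List κ :=
  List.ofFn fun i : Fin n => x i.1

open Topology PiNat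

section

variable {κ : Type*}

lemma seg_eq_of_mem_cylinder {x y : ℕ → κ} {k : ℕ} (h : y ∈ cylinder x k) : seg y k = seg x k :=
  List.ofFn_inj.mpr (funext fun i => h i.1 i.2)

lemma isOpen_setOf_exists_seg_mem [TopologicalSpace κ] [DiscreteTopology κ]
    (E : Set (List κ)) : IsOpen {x : ℕ → κ | ∃ k, seg x k ∈ E} := by
  refine isOpen_iff_forall_mem_open.mpr fun x ⟨k, hk⟩ => ⟨cylinder x k, ?_, isOpen_cylinder _ x k,
    self_mem_cylinder x k⟩
  exact fun y hy => ⟨k, (seg_eq_of_mem_cylinder hy).symm ▸ hk⟩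

def prepend (r : List κ) (y : ℕ → κ) : ℕ → κ :=
  fun i => if h : i < r.length then r[i] else y i

lemma seg_prepend_length (r : List κ) (y : ℕ → κ) : seg (prepend r y) r.length = r := by
  conv_rhs => rw [← List.ofFn_getElem (xs := r)]
  exact List.ofFn_inj.mpr (funext fun i => dif_pos i.2)

lemma prepend_mem_cylinder {r : List κ} {y : ℕ → κ} {m : ℕ} (h : seg y m <+: r) :
    prepend r y ∈ cylinder y m := by
  intro i hi
  have hi' : i < (seg y m).length := by simpa [seg] using hi
  have hir : i < r.length := hi'.trans_le h.length_le
  rw [prepend, dif_pos hir, ← h.getElem hi']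
  simp [seg]

lemma prepend_mem_of_forall_mem {σ : Set κ} {r : List κ} {y : ℕ → κ} (hr : ∀ a ∈ r, a ∈ σ)
    (hy : ∀ n, y n ∈ σ) (i : ℕ) : prepend r y i ∈ σ := by
  unfold prepend
  split_ifs with h
  · exact hr _ (List.getElem_mem h)
  · exact hy i

lemma dense_preimage_setOf_exists_seg_mem [TopologicalSpace κ] [DiscreteTopology κ]
    {σ : Set κ} {E : Set (List κ)}
    (hE : ∀ q : List κ, (∀ a ∈ q, a ∈ σ) → ∃ r ∈ E, q <+: r ∧ ∀ a ∈ r, a ∈ σ) :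
    Dense (Subtype.val ⁻¹' {x : ℕ → κ | ∃ k, seg x k ∈ E} : Set (SeqIn σ)) := by
  refine ((isTopologicalBasis_cylinders fun _ => κ).isInducing
    IsInducing.subtypeVal).dense_iff.mpr ?_
  rintro _ ⟨_, ⟨x, m, rfl⟩, rfl⟩ ⟨y, hy⟩
  rw [mem_preimage, mem_cylinder_iff_eq] at hy
  have hseg : ∀ a ∈ seg y.1 m, a ∈ σ := by
    simp only [seg, List.mem_ofFn]
    rintro _ ⟨i, rfl⟩
    exact y.2 i
  obtain ⟨r, hrE, hyr, hrσ⟩ := hE _ hseg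
  refine ⟨⟨prepend r y.1, prepend_mem_of_forall_mem hrσ y.2⟩, ?_, r.length, ?_⟩
  · exact hy ▸ prepend_mem_cylinder hyr
  · exact (seg_prepend_length r y.1).symm ▸ hrE

end

theorem comeager_relativizes_general (κ : Type*) [TopologicalSpace κ]
    [DiscreteTopology κ] (σ : Set κ) (B : Set (ℕ → κ))
    (p : List κ) (D : ℕ → Set (List κ))
    (hdense : ∀ n, ∀ q : List κ, (∀ a ∈ q, a ∈ σ) →
      ∃ r ∈ D n, q <+: r ∧ ∀ a ∈ r, a ∈ σ)
    (hwit : ∀ x ∈ Np p, (∀ n, ∃ k, seg x k ∈ D n) → x ∈ B) :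
    ComeagerBelowIn σ B p := by
  have hres : ⋂ n, (Subtype.val ⁻¹' {x : ℕ → κ | ∃ k, seg x k ∈ D n} : Set (SeqIn σ)) ∈
      residual (SeqIn σ) := countable_iInter_mem.mpr fun n =>
    residual_of_dense_open ((isOpen_setOf_exists_seg_mem (D n)).preimage continuous_subtype_val)
      (dense_preimage_setOf_exists_seg_mem (hdense n))
  exact Filter.mem_of_superset hres fun x hx ⟨hxp, hxB⟩ =>
    hxB (hwit x.1 hxp fun n => mem_iInter.mp hx n)

/-- Let `σ ⊆ κ` be countable and `p ∈ σ^{<ω}`.  Suppose `B ⊆ κ^ω` is comeager below `p`,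
witnessed by a sequence of dense open sets, the `n`-th determined by a dense set `D n` of
conditions which is moreover dense in `σ^{<ω}` (every condition in `σ^{<ω}` extends to a
condition in `D n ∩ σ^{<ω}`): every `x ∈ N_p` meeting each `D n` lies in `B`.
Then `B ∩ σ^ω` is comeager below `p` in the space `σ^ω`. -/
theorem comeager_relativizes (κ : Type*) [Infinite κ] [TopologicalSpace κ]
    [DiscreteTopology κ] (σ : Set κ) (hσ : σ.Countable) (B : Set (ℕ → κ))
    (p : List κ) (hp : ∀ a ∈ p, a ∈ σ) (D : ℕ → Set (List κ))
    (hdense : ∀ n, ∀ q : List κ, (∀ a ∈ q, a ∈ σ) →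
      ∃ r ∈ D n, q <+: r ∧ ∀ a ∈ r, a ∈ σ)
    (hwit : ∀ x ∈ Np p, (∀ n, ∃ k, seg x k ∈ D n) → x ∈ B) :
    ComeagerBelowIn σ B p :=
  comeager_relativizes_general κ σ B p D hdense hwit
end

section
/- Suppose κ is weakly compact and P is a κ-cc forcing notion. Then for every P-name ẋ for a real (element of ω^ω), there is a complete suborder A of P of size < κ such that ẋ is (equivalent to) an A-name; i.e., there is A ⊆ P with |A| < κ such that every maximal antichain of A is a maximal antichain of P, and ẋ is decided by conditions in A. -/
open Set Cardinal

/-- `κ` is weakly compact: `κ` is uncountable and satisfies the partition property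
`κ → (κ)²₂`; every 2-coloring of pairs from a well-ordered set of type `κ.ord` has a
homogeneous set of size `κ`. -/
def IsWeaklyCompact (κ : Cardinal.{u}) : Prop :=
  ℵ₀ < κ ∧ ∀ c : κ.ord.ToType → κ.ord.ToType → Bool,
    ∃ H : Set κ.ord.ToType, Cardinal.mk H = κ ∧
      ∀ a ∈ H, ∀ b ∈ H, ∀ a' ∈ H, ∀ b' ∈ H, a < b → a' < b' → c a b = c a' b'

/-- Two conditions of a poset are compatible. -/
def Compat {P : Type*} [PartialOrder P] (p q : P) : Prop := ∃ r, r ≤ p ∧ r ≤ q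

/-- An antichain in a forcing poset: a pairwise incompatible set of conditions. -/
def IsAntichainIn {P : Type*} [PartialOrder P] (A : Set P) : Prop :=
  ∀ p ∈ A, ∀ q ∈ A, p ≠ q → ¬ Compat p q

/-!
Weak compactness yields, for any `κ` sets of ordinals below `κ`, a choice `U` of which of them to
believe such that any fewer than `κ` of these beliefs hold simultaneously at unboundedly many
ordinals: the partition property gives a lexicographically monotone or antitone `κ`-subsequence of
the characteristic functions, and as `κ` is a strong limit every coordinate of it stabilises.
Comparing words of regressive maps along such a `U` and passing to the least nonconstant word makes
it normal: regressive maps become constant.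

If no small complete suborder contained the union `A₀` of the antichains of the name (small by the
`κ`-cc), there would be a `κ`-sequence of conditions `q δ`, each incompatible with a maximal
antichain `X δ` of `A₀ ∪ {q γ | γ < δ}`. The conditions lying in `X δ` for `U`-many `δ` form an
antichain, hence a small one, contained in some `X δs`. By normality, for `U`-many `δ` a member of
`X δ` compatible with `q δs` already appears at one fixed stage, so it lies in that antichain,
contradicting the choice of `q δs`.
-/

open Filter Order Ordinal

universe u

theorem Filter.cardinalInterFilter_atTop_cof (α : Type u) [LinearOrder α] [Nonempty α] :
    CardinalInterFilter (atTop : Filter α) (cof α) where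
  cardinal_sInter_mem S hS hmem := by
    choose! b hb using fun s hs => mem_atTop_sets.1 (hmem s hs)
    obtain ⟨a, ha⟩ := not_isCofinal_iff.1 fun h => ((cof_le h).trans mk_image_le).not_gt hS
    exact mem_atTop_sets.2
      ⟨a, fun x hx s hs => hb s hs x ((ha _ (mem_image_of_mem b hs)).le.trans hx)⟩

theorem Pi.Lex.monotone_domRestrict {σ β : Type*} [LinearOrder σ] [PartialOrder β] {D : Set σ}
    (hD : IsLowerSet D) : Monotone fun x : Lex (σ → β) => toLex (D.domRestrict (ofLex x)) := by
  intro x y hxy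
  obtain rfl | ⟨i, hi, hlt⟩ := hxy.eq_or_lt
  · rfl
  by_cases hiD : i ∈ D
  · exact le_of_lt ⟨⟨i, hiD⟩, fun j hj => hi j hj, hlt⟩
  · exact le_of_eq (congrArg toLex (funext fun j => hi j (lt_of_not_ge fun h => hiD (hD h j.2))))

theorem Cardinal.mk_Iic_ord_toType_lt {c : Cardinal.{u}} (hc : ℵ₀ ≤ c) (i : c.ord.ToType) :
    #(Iic i) < c := by
  simpa using mk_Iic_lt i (by simp) (by simpa using hc)

variable {κ : Cardinal.{u}}

local notation "ι" => κ.ord.ToType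

namespace Cardinal.IsRegular

theorem cardinalInterFilter_atTop (hκ : κ.IsRegular) :
    CardinalInterFilter (atTop : Filter ι) κ := by
  have : Nonempty ι := by rw [← mk_ne_zero_iff, mk_ord_toType]; exact hκ.pos.ne'
  simpa [cof_toType, hκ.cof_ord] using cardinalInterFilter_atTop_cof ι

theorem eventuallyConst_apply_of_lex_monotone_or_antitone (hκ : κ.IsRegular) {σ : Type u}
    [LinearOrder σ] {t : ι → σ → Bool} (ht : Monotone (toLex ∘ t) ∨ Antitone (toLex ∘ t))
    {ξ : σ} (hξ : 2 ^ #(Iic ξ) < κ) : atTop.EventuallyConst fun α => t α ξ := by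
  have hsmall : Cardinal.lift.{u} #(Lex (Iic ξ → Bool)) < Cardinal.lift.{u} (Order.cof ι) := by
    simpa [← mk_congr (toLex : (Iic ξ → Bool) ≃ _), cof_toType, hκ.cof_ord] using hξ
  have hmono := Pi.Lex.monotone_domRestrict (β := Bool) (isLowerSet_Iic ξ)
  have hr : atTop.EventuallyConst fun α => toLex ((Iic ξ).domRestrict (t α)) := by
    rcases ht with ht | ht
    · exact .of_monotone_of_lt_cof (hmono.comp ht) hsmall
    · exact .of_antitone_of_lt_cof (hmono.comp_antitone ht) hsmall
  exact hr.comp fun x => ofLex x ⟨ξ, self_mem_Iic⟩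

end Cardinal.IsRegular

namespace IsWeaklyCompact

theorem noMaxOrder (h : IsWeaklyCompact κ) : NoMaxOrder ι := Cardinal.noMaxOrder h.1.le

theorem nonempty (h : IsWeaklyCompact κ) : Nonempty ι := by
  rw [← mk_ne_zero_iff, mk_ord_toType]; exact (aleph0_pos.trans h.1).ne'

theorem exists_strictMono_homogeneous (h : IsWeaklyCompact κ) (c : ι → ι → Bool) :
    ∃ e : ι → ι, StrictMono e ∧ ∃ b, ∀ α β, α < β → c (e α) (e β) = b := by
  obtain ⟨H, hH, hhom⟩ := h.2 c
  have : typeLT ι ≤ typeLT H := by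
    rw [type_toType, ord_le, card_type, hH]
  obtain ⟨f⟩ := type_le_iff'.1 this
  have hf : StrictMono fun α => (f α : ι) := fun a b hab => f.map_rel_iff.2 hab
  have := h.noMaxOrder
  obtain ⟨α₀⟩ := h.nonempty
  obtain ⟨α₁, h01⟩ := exists_gt α₀
  exact ⟨_, hf, c (f α₀) (f α₁), fun α β hαβ =>
    hhom _ (f α).2 _ (f β).2 _ (f α₀).2 _ (f α₁).2 (hf hαβ) (hf h01)⟩

theorem isRegular (h : IsWeaklyCompact κ) : κ.IsRegular := by
  refine ⟨h.1.le, not_lt.1 fun hcof => ?_⟩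
  obtain ⟨S, hS, hSmk⟩ := exists_cof_eq ι
  rw [cof_toType] at hSmk
  choose g hgS hg using hS
  -- along a homogeneous sequence `g` is either injective into `S` or constant, hence bounded
  obtain ⟨e, he, b, hb⟩ := h.exists_strictMono_homogeneous fun α β => decide (g α = g β)
  cases b
  · have hinj : Function.Injective fun α => (⟨g (e α), hgS _⟩ : S) := by
      intro α β hαβ
      by_contra hne
      rcases lt_or_gt_of_ne hne with hlt | hlt
      · exact of_decide_eq_false (hb α β hlt) (congrArg Subtype.val hαβ)
      · exact of_decide_eq_false (hb β α hlt) (congrArg Subtype.val hαβ).symm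
    have := mk_le_of_injective hinj
    rw [mk_ord_toType, hSmk] at this
    exact this.not_gt hcof
  · have := h.noMaxOrder
    obtain ⟨α₀⟩ := h.nonempty
    obtain ⟨α, hα⟩ := exists_gt (g (e α₀))
    have h0 : α₀ < α := (he.le_apply.trans (hg _)).trans_lt hα
    have : g (e α₀) = g (e α) := by simpa using hb α₀ α h0
    exact (he.le_apply.trans (hg _)).not_gt (this ▸ hα)

theorem exists_strictMono_monotone_or_antitone (h : IsWeaklyCompact κ) {L : Type*}
    [LinearOrder L] (f : ι → L) :
    ∃ e : ι → ι, StrictMono e ∧ (Monotone (f ∘ e) ∨ Antitone (f ∘ e)) := by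
  obtain ⟨e, he, b, hb⟩ := h.exists_strictMono_homogeneous fun α β => decide (f α ≤ f β)
  refine ⟨e, he, ?_⟩
  cases b
  · exact .inr <| antitone_iff_forall_lt.2 fun α β hαβ =>
      (not_le.1 (by simpa using hb α β hαβ)).le
  · exact .inl <| monotone_iff_forall_lt.2 fun α β hαβ => by simpa using hb α β hαβ

theorem two_power_lt (h : IsWeaklyCompact κ) {μ : Cardinal.{u}} (hμ : μ < κ) : 2 ^ μ < κ := by
  induction μ using WellFoundedLT.induction with
  | _ μ ih =>
  by_contra! hle
  have hinf : ℵ₀ ≤ μ := not_lt.1 fun hfin =>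
    hle.not_gt ((power_lt_aleph0 (natCast_lt_aleph0 (n := 2)) hfin).trans h.1)
  obtain ⟨t⟩ : Nonempty (ι ↪ (μ.ord.ToType → Bool)) := by
    rw [← Cardinal.le_def]; simpa using hle
  have := h.noMaxOrder
  have := h.nonempty
  have := h.isRegular.cardinalInterFilter_atTop
  -- each coordinate of the distinct sets `t (e α)` stabilises, as `2 ^ #(Iic ξ) < κ` by induction
  obtain ⟨e, he, ht⟩ := h.exists_strictMono_monotone_or_antitone (toLex ∘ t)
  have hξ ξ := ih _ (mk_Iic_ord_toType_lt hinf ξ) ((mk_Iic_ord_toType_lt hinf ξ).trans hμ)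
  choose z hz using fun ξ =>
    (h.isRegular.eventuallyConst_apply_of_lex_monotone_or_antitone ht (hξ ξ)).eventuallyEq_const
  obtain ⟨α₀, hα₀⟩ := eventually_atTop.1 ((eventually_cardinal_forall (by simpa using hμ)).2 hz)
  obtain ⟨α₁, h01⟩ := exists_gt α₀
  exact h01.ne (he.injective (t.injective (funext fun ξ =>
    (hα₀ α₀ le_rfl ξ).trans (hα₀ α₁ h01.le ξ).symm)))

theorem exists_frequently_realized (h : IsWeaklyCompact κ) {C : Type u} (hC : #C ≤ κ)
    (B : C → Set ι) :
    ∃ U : Set C, ∀ s : Set C, #s < κ → ∃ᶠ α in atTop, ∀ c ∈ s, (α ∈ B c ↔ c ∈ U) := by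
  classical
  have := h.noMaxOrder
  have := h.nonempty
  have := h.isRegular.cardinalInterFilter_atTop
  obtain ⟨enc⟩ : Nonempty (C ↪ ι) := by rwa [← Cardinal.le_def, mk_ord_toType]
  let t : ι → ι → Bool := fun α ξ => decide (∀ c, enc c = ξ → α ∈ B c)
  obtain ⟨e, he, ht⟩ := h.exists_strictMono_monotone_or_antitone (toLex ∘ t)
  choose z hz using fun ξ => (h.isRegular.eventuallyConst_apply_of_lex_monotone_or_antitone ht
    (h.two_power_lt (mk_Iic_ord_toType_lt h.1.le ξ))).eventuallyEq_const
  refine ⟨{c | z (enc c) = true}, fun s hs => ?_⟩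
  have hev : ∀ᶠ α in atTop, ∀ c ∈ s, t (e α) (enc c) = z (enc c) :=
    (eventually_cardinal_ball hs).2 fun c _ => hz (enc c)
  refine (tendsto_atTop_atTop_of_monotone he.monotone fun β => ⟨β, he.le_apply⟩).frequently
    (hev.mono fun α hα c hc => ?_).frequently
  change _ ↔ z (enc c) = true
  rw [← hα c hc]
  simp [t, enc.injective.eq_iff]

end IsWeaklyCompact

section Words

variable {J K : Type u}

abbrev WordCode (κ : Cardinal.{u}) (J K : Type u) :=
  (J × List K) ⊕ (List K × List K) ⊕ (List K × κ.ord.ToType)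

/-- Membership, comparison and constancy of the maps given by words in the `g k`: what a realized
type must decide to behave like an ultrapower. -/
def wordSet (S : J → Set ι) (g : K → Function.End ι) : WordCode κ J K → Set ι
  | .inl (j, l) => {α | (l.map g).prod α ∈ S j}
  | .inr (.inl (l, l')) => {α | (l.map g).prod α < (l'.map g).prod α}
  | .inr (.inr (l, γ)) => {α | (l.map g).prod α = γ}

theorem mk_wordCode_le (hκ : ℵ₀ ≤ κ) (hJ : #J ≤ κ) (hK : #K ≤ κ) : #(WordCode κ J K) ≤ κ := by
  have hL : #(List K) ≤ κ := (mk_list_le_max K).trans (max_le hκ hK)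
  simp only [mk_sum, mk_prod, Cardinal.lift_id, mk_ord_toType]
  exact add_le_of_le hκ (mul_le_of_le hκ hJ hL)
    (add_le_of_le hκ (mul_le_of_le hκ hL hL) (mul_le_of_le hκ hL le_rfl))

theorem wellFounded_realized_lt (hκ : ℵ₀ < κ) {S : J → Set ι} {g : K → Function.End ι}
    {U : Set (WordCode κ J K)}
    (hU : ∀ s : Set _, #s < κ → ∃ᶠ α in atTop, ∀ c ∈ s, (α ∈ wordSet S g c ↔ c ∈ U)) :
    WellFounded fun l l' : List K => .inr (.inl (l, l')) ∈ U := by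
  rw [wellFounded_iff_isEmpty_descending_chain]
  refine ⟨fun ⟨f, hf⟩ => ?_⟩
  have hs : #(range fun n => (.inr (.inl (f (n + 1), f n)) : WordCode κ J K)) < κ :=
    (mk_le_aleph0_iff.2 (countable_range _).to_subtype).trans_lt hκ
  obtain ⟨α, hα⟩ := (hU _ hs).exists
  obtain ⟨n, hn⟩ := WellFounded.not_rel_apply_succ (r := (· < ·)) fun n => ((f n).map g).prod α
  exact hn ((hα _ ⟨n, rfl⟩).2 (hf n))

end Words

theorem IsWeaklyCompact.exists_normal_realized (h : IsWeaklyCompact κ) {J K : Type u}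
    (hJ : #J ≤ κ) (hK : #K ≤ κ) (S : J → Set ι) (g : K → Function.End ι) :
    ∃ (U : Set J) (c : K → ι), ∀ s : Set J, #s < κ → ∀ k,
      ∃ᶠ δ in atTop, (∀ j ∈ s, (δ ∈ S j ↔ j ∈ U)) ∧ (g k δ < δ → g k δ = c k) := by
  have := h.nonempty
  have := h.noMaxOrder
  obtain ⟨V, hV⟩ := h.exists_frequently_realized (mk_wordCode_le h.1.le hJ hK) (wordSet S g)
  have wf := wellFounded_realized_lt h.1 hV
  let nonconst := {l : List K | ∀ γ, Sum.inr (Sum.inr (l, γ)) ∉ V}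
  have hnil : [] ∈ nonconst := fun γ hγ => by
    obtain ⟨α, hα, hγα⟩ := ((hV {.inr (.inr ([], γ))}
      ((mk_singleton _).trans_lt (one_lt_aleph0.trans h.1))).and_eventually
      (eventually_gt_atTop γ)).exists
    exact hγα.ne' ((hα _ rfl).2 hγ)
  -- `w` plays the role of the identity in a normal ultrapower
  set w := wf.min nonconst ⟨[], hnil⟩
  have hc : ∀ k, ∃ γ, Sum.inr (Sum.inl (k :: w, w)) ∈ V → Sum.inr (Sum.inr (k :: w, γ)) ∈ V := by
    intro k
    by_contra! hk
    obtain ⟨γ₀⟩ := ‹Nonempty ι›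
    exact wf.not_lt_min nonconst (fun γ => (hk γ).2) (hk γ₀).1
  choose c hc using hc
  refine ⟨{j | Sum.inl (j, w) ∈ V}, c, fun s hs k => frequently_atTop.2 fun β => ?_⟩
  let codes : Set (WordCode κ J K) :=
    (fun j => .inl (j, w)) '' s ∪ (fun γ => .inr (.inr (w, γ))) '' Iio β ∪
      {.inr (.inl (k :: w, w)), .inr (.inr (k :: w, c k))}
  have hcodes : #codes < κ := by
    refine (mk_union_le _ _).trans_lt (add_lt_of_lt h.1.le ((mk_union_le _ _).trans_lt
      (add_lt_of_lt h.1.le (mk_image_le.trans_lt hs) (mk_image_le.trans_lt ?_))) ?_)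
    · simpa using mk_Iio_lt β
    · exact (toFinite _).lt_aleph0.trans h.1
  obtain ⟨α, hα⟩ := (hV codes hcodes).exists
  refine ⟨(w.map g).prod α, ?_, fun j hj => hα _ (.inl (.inl ⟨j, hj, rfl⟩)), fun hlt => ?_⟩
  · by_contra! hlt
    exact wf.min_mem nonconst _ _ ((hα _ (.inl (.inr ⟨_, hlt, rfl⟩))).1 rfl)
  · exact (hα _ (.inr (.inr rfl))).2 (hc k ((hα _ (.inr (.inl rfl))).1 hlt))

section Forcing

variable {P : Type u} [PartialOrder P]

def IsCompleteSuborder (A : Set P) : Prop :=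
  ∀ X ⊆ A, IsAntichainIn X → (∀ p ∈ A, ∃ q ∈ X, Compat p q) → ∀ p : P, ∃ q ∈ X, Compat p q

theorem exists_compat_mem_insert_of_predense {σ : Type*} [LinearOrder σ] {A₀ X : Set P}
    {q : σ → P} {δ : σ} (hX : X ⊆ A₀ ∪ q '' Iio δ)
    (hXdense : ∀ p ∈ A₀ ∪ q '' Iio δ, ∃ x ∈ X, Compat p x)
    {β : σ} (hβ : β < δ) {a : P} (ha : a ∈ A₀ ∪ q '' Iio δ) :
    ∃ γ < δ, ∃ x ∈ X, x ∈ insert (q γ) A₀ ∧ Compat a x := by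
  obtain ⟨x, hxX, hax⟩ := hXdense a ha
  rcases hX hxX with hx | ⟨γ, hγ, rfl⟩
  · exact ⟨β, hβ, x, hxX, .inr hx, hax⟩
  · exact ⟨γ, hγ, _, hxX, .inl rfl, hax⟩

namespace IsWeaklyCompact

theorem false_of_witness_sequence (h : IsWeaklyCompact κ)
    (hcc : ∀ A : Set P, IsAntichainIn A → #A < κ) {A₀ : Set P} (hA₀ : #A₀ < κ) {q : ι → P}
    {X : ι → Set P} (hX : ∀ δ, X δ ⊆ A₀ ∪ q '' Iio δ) (hXanti : ∀ δ, IsAntichainIn (X δ))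
    (hXdense : ∀ δ, ∀ p ∈ A₀ ∪ q '' Iio δ, ∃ x ∈ X δ, Compat p x)
    (hq : ∀ δ, ∀ x ∈ X δ, ¬ Compat (q δ) x) : False := by
  let Q := A₀ ∪ range q
  have hQ : #Q ≤ κ := (mk_union_le _ _).trans
    (add_le_of_le h.1.le hA₀.le (mk_range_le.trans (mk_ord_toType κ).le))
  have hstage : ∀ (a : Q) (δ : ι), ∃ γ, (∃ β < δ, a.1 ∈ A₀ ∪ q '' Iio δ) →
      γ < δ ∧ ∃ x ∈ X δ, x ∈ insert (q γ) A₀ ∧ Compat a.1 x := fun a δ => by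
    by_cases hδ : ∃ β < δ, a.1 ∈ A₀ ∪ q '' Iio δ
    · obtain ⟨β, hβ, ha⟩ := hδ
      obtain ⟨γ, hγ, hx⟩ := exists_compat_mem_insert_of_predense (hX δ) (hXdense δ) hβ ha
      exact ⟨γ, fun _ => ⟨hγ, hx⟩⟩
    · exact ⟨δ, fun h => (hδ h).elim⟩
  choose g hg using hstage
  obtain ⟨U, c, hU⟩ := h.exists_normal_realized hQ hQ (fun y => {δ | y.1 ∈ X δ}) g
  have hUanti : IsAntichainIn (Subtype.val '' U) := by
    rintro _ ⟨y, hy, rfl⟩ _ ⟨y', hy', rfl⟩ hne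
    obtain ⟨δ, hδ, -⟩ := (hU {y, y'} ((toFinite _).lt_aleph0.trans h.1) y).exists
    exact hXanti δ _ ((hδ y (.inl rfl)).2 hy) _ ((hδ y' (.inr rfl)).2 hy') hne
  have hUsmall : #U < κ := (mk_image_eq Subtype.val_injective).symm.trans_lt (hcc _ hUanti)
  obtain ⟨δ₀⟩ := h.nonempty
  have := h.noMaxOrder
  obtain ⟨δs, hδs, -⟩ := (hU U hUsmall ⟨q δ₀, .inr ⟨δ₀, rfl⟩⟩).exists
  let a : Q := ⟨q δs, .inr ⟨δs, rfl⟩⟩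
  have hs : #(Subtype.val ⁻¹' insert (q (c a)) A₀ : Set Q) < κ :=
    (mk_preimage_of_injective _ _ Subtype.val_injective).trans_lt
      (mk_insert_le.trans_lt (add_lt_of_lt h.1.le hA₀ (one_lt_aleph0.trans h.1)))
  obtain ⟨δ, ⟨hδ, hgc⟩, hδsδ⟩ := ((hU _ hs a).and_eventually (eventually_gt_atTop δs)).exists
  obtain ⟨hlt, x, hxX, hxs, hax⟩ := hg a δ ⟨δs, hδsδ, .inr ⟨δs, hδsδ, rfl⟩⟩
  rw [hgc hlt] at hxs
  have hxQ : x ∈ Q := (hX δ hxX).imp id fun ⟨γ, _, hγ⟩ => ⟨γ, hγ⟩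
  have hxU : ⟨x, hxQ⟩ ∈ U := (hδ ⟨x, hxQ⟩ hxs).1 hxX
  exact hq δs x ((hδs _ hxU).2 hxU) hax

theorem exists_isCompleteSuborder (h : IsWeaklyCompact κ)
    (hcc : ∀ A : Set P, IsAntichainIn A → #A < κ) {A₀ : Set P} (hA₀ : #A₀ < κ) :
    ∃ A : Set P, #A < κ ∧ A₀ ⊆ A ∧ IsCompleteSuborder A := by
  by_contra! hno
  have hfail : ∀ A : Set P, #A < κ → A₀ ⊆ A → ∃ X ⊆ A, IsAntichainIn X ∧
      (∀ p ∈ A, ∃ x ∈ X, Compat p x) ∧ ∃ w, ∀ x ∈ X, ¬ Compat w x := fun A hA hA₀A => by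
    simpa [IsCompleteSuborder] using hno A hA hA₀A
  obtain ⟨-, -, -, -, p₀, -⟩ := hfail A₀ hA₀ subset_rfl
  have : ∀ A : Set P, ∃ X : Set P, ∃ w : P, #A < κ → A₀ ⊆ A → X ⊆ A ∧ IsAntichainIn X ∧
      (∀ p ∈ A, ∃ x ∈ X, Compat p x) ∧ ∀ x ∈ X, ¬ Compat w x := fun A => by
    by_cases hA : #A < κ ∧ A₀ ⊆ A
    · obtain ⟨X, hXA, hXanti, hXdense, w, hw⟩ := hfail A hA.1 hA.2
      exact ⟨X, w, fun _ _ => ⟨hXA, hXanti, hXdense, hw⟩⟩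
    · exact ⟨∅, p₀, fun h₁ h₂ => (hA ⟨h₁, h₂⟩).elim⟩
  choose X w hXw using this
  let q : ι → P := wellFounded_lt.fix fun δ q => w (A₀ ∪ range fun γ : Iio δ => q γ γ.2)
  have hq : ∀ δ, q δ = w (A₀ ∪ q '' Iio δ) := fun δ =>
    (WellFounded.fix_eq _ _ _).trans (by rw [image_eq_range])
  have hsmall : ∀ δ : ι, #(A₀ ∪ q '' Iio δ : Set P) < κ := fun δ =>
    (mk_union_le _ _).trans_lt
      (add_lt_of_lt h.1.le hA₀ (mk_image_le.trans_lt (by simpa using mk_Iio_lt δ)))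
  have hXw' := fun δ => hXw _ (hsmall δ) subset_union_left
  exact h.false_of_witness_sequence hcc hA₀ (fun δ => (hXw' δ).1) (fun δ => (hXw' δ).2.1)
    (fun δ => (hXw' δ).2.2.1) fun δ => hq δ ▸ (hXw' δ).2.2.2

end IsWeaklyCompact

end Forcing

theorem name_captured_by_small_complete_suborder_general {P : Type u} [PartialOrder P]
    (κ : Cardinal.{u}) (hwc : IsWeaklyCompact κ)
    (hcc : ∀ A : Set P, IsAntichainIn A → Cardinal.mk A < κ)
    (x : ℕ → ℕ → Set P)
    (hanti : ∀ n, IsAntichainIn (⋃ m, x n m)) :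
    ∃ A : Set P, Cardinal.mk A < κ ∧ (∀ n m, x n m ⊆ A) ∧
      ∀ X ⊆ A, IsAntichainIn X → (∀ p ∈ A, ∃ q ∈ X, Compat p q) →
        ∀ p : P, ∃ q ∈ X, Compat p q := by
  have hsmall : #(⋃ n, ⋃ m, x n m) < κ := by
    rw [← Equiv.ulift.{u}.surjective.iUnion_comp]
    exact (card_iUnion_lt_iff_forall_of_isRegular hwc.isRegular (by simpa using hwc.1)).2
      fun n => hcc _ (hanti n.down)
  obtain ⟨A, hA, hxA, hAc⟩ := hwc.exists_isCompleteSuborder hcc hsmall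
  exact ⟨A, hA, fun n m => (subset_iUnion₂ n m).trans hxA, hAc⟩

/-- Suppose `κ` is weakly compact and `P` is a `κ`-cc forcing notion.  A `P`-name `ẋ` for
a real is given by countably many (maximal) antichains `x n m` (the conditions forcing
`ẋ(n) = m`).  Then there is a complete suborder `A ⊆ P` of size `< κ` such that `ẋ` is an
`A`-name: `A` contains all the antichains of the name, and every maximal antichain of `A`
is a maximal antichain of `P`. -/
theorem name_captured_by_small_complete_suborder {P : Type u} [PartialOrder P]
    (κ : Cardinal.{u}) (hwc : IsWeaklyCompact κ)
    (hcc : ∀ A : Set P, IsAntichainIn A → Cardinal.mk A < κ)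
    (x : ℕ → ℕ → Set P)
    (hanti : ∀ n, IsAntichainIn (⋃ m, x n m))
    (hmax : ∀ n, ∀ p : P, ∃ q ∈ ⋃ m, x n m, Compat p q) :
    ∃ A : Set P, Cardinal.mk A < κ ∧ (∀ n m, x n m ⊆ A) ∧
      ∀ X ⊆ A, IsAntichainIn X → (∀ p ∈ A, ∃ q ∈ X, Compat p q) →
        ∀ p : P, ∃ q ∈ X, Compat p q :=
  name_captured_by_small_complete_suborder_general κ hwc hcc x hanti
end

section
/- If A ⊆ ω^ω is weakly captured at κ in the sense of clubs (condition (2)), then A admits a weak capturing term: the assignment Ȧ = { (p, τ) : f_τ⁻¹(A) ∩ σ^ω is comeager below p in σ^ω for a club of σ ∈ [κ]^ω } satisfies: for comeager many g ∈ σ^ω (for club many σ), the evaluation of Ȧ by g computes A correctly on the reals coded, i.e., for comeager many g, f_τ(g) ∈ A iff some initial segment p of g has (p,τ) ∈ Ȧ. -/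
open Set

/-!
Fix an extension `e q` of each condition `q` into the dense set of conditions `p` below which
`f ⁻¹' A` is decided, i.e. club-often relatively meagre or club-often relatively comeagre.
Clubs generate a countably complete filter on `[κ]^ω` which is moreover closed under diagonal
intersections indexed by `κ^{<ω}`. Hence for club many `σ`, every `p ∈ σ^{<ω}` has
`e p ∈ σ^{<ω}` and `σ` belongs to the clubs witnessing the decision made at `p`. For such `σ`
the decided conditions are dense in `σ^{<ω}`, so comeagre many `x ∈ σ^ω` have a decided initial
segment; discarding the countably many meagre sets attached to the decisions at conditions in
`σ^{<ω}`, `f x ∈ A` holds exactly when some initial segment of `x` is decided positively.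
-/

open Filter Topology

section

variable {κ : Type*}

def listsIn (σ : Set κ) : Set (List κ) := {p | ∀ b ∈ p, b ∈ σ}

lemma nil_mem_listsIn (σ : Set κ) : [] ∈ listsIn σ := by simp [listsIn]

lemma seg_mem_listsIn {σ : Set κ} (x : SeqIn σ) (n : ℕ) : seg x.1 n ∈ listsIn σ := by
  intro b hb
  obtain ⟨i, rfl⟩ := List.mem_ofFn.1 hb
  exact x.2 i

lemma Set.Countable.listsIn {σ : Set κ} (hσ : σ.Countable) : (listsIn σ).Countable := by
  have := hσ.to_subtype
  refine (countable_range (List.map ((↑) : σ → κ))).mono fun p hp => ?_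
  exact ⟨p.attach.map fun b => ⟨b.1, hp b.1 b.2⟩, by simp⟩

lemma eventually_mem_listsIn {s : ℕ → Set κ} (hs : Monotone s) {p : List κ}
    (hp : p ∈ listsIn (⋃ n, s n)) : ∀ᶠ n in atTop, p ∈ listsIn (s n) := by
  refine (List.finite_toSet p).eventually_all.2 fun b hb => ?_
  obtain ⟨n, hn⟩ := mem_iUnion.1 (hp b hb)
  exact eventually_atTop.2 ⟨n, fun m hm => hs hm hn⟩

lemma exists_countable_chain {R : ℕ → Set κ → Set κ → Prop}
    (hR : ∀ k s, s.Countable → ∃ t, t.Countable ∧ s ⊆ t ∧ R k s t) {a : Set κ}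
    (ha : a.Countable) :
    ∃ ρ : ℕ → Set κ, ρ 0 = a ∧ Monotone ρ ∧ ∀ k, R k (ρ k) (ρ (k + 1)) := by
  choose! t htc hst htR using hR
  let ρ : ℕ → Set κ := fun k => Nat.rec a (fun k s => t k s) k
  have hρc : ∀ k, (ρ k).Countable := fun k => Nat.rec ha (fun k ih => htc k _ ih) k
  exact ⟨ρ, rfl, monotone_nat_of_le_succ fun k => hst k _ (hρc k), fun k => htR k _ (hρc k)⟩

lemma isClubIn_countable : IsClubIn {σ : Set κ | σ.Countable} :=
  ⟨fun _ h => h, fun a ha => ⟨a, ha, subset_rfl⟩, fun _ hs _ => countable_iUnion hs⟩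

lemma IsClubIn.iUnion_mem {C : Set (Set κ)} (hC : IsClubIn C) {s : ℕ → Set κ} (hs : Monotone s)
    (h : ∃ᶠ n in atTop, s n ∈ C) : ⋃ n, s n ∈ C := by
  obtain ⟨φ, hφ, hφC⟩ := extraction_of_frequently_atTop h
  rw [← hs.iUnion_comp_tendsto_atTop hφ.tendsto_atTop]
  exact hC.2.2 _ hφC (hs.comp hφ.monotone)

lemma IsClubIn.iInter {ι : Type*} [Countable ι] [Nonempty ι] {C : ι → Set (Set κ)}
    (hC : ∀ i, IsClubIn (C i)) : IsClubIn (⋂ i, C i) := by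
  obtain ⟨g, hg⟩ := exists_surjective_nat ι
  refine ⟨fun σ hσ => (hC (g 0)).1 σ (mem_iInter.1 hσ _), fun a ha => ?_,
    fun s hs hmono => mem_iInter.2 fun i =>
      (hC i).iUnion_mem hmono (Frequently.of_forall fun n => mem_iInter.1 (hs n) i)⟩
  -- each club is visited infinitely often, at the stages `Nat.pair j m + 1` with `g j = i`
  have step : ∀ (k : ℕ) s, s.Countable → ∃ t, t.Countable ∧ s ⊆ t ∧ t ∈ C (g k.unpair.1) :=
    fun k s hs => let ⟨t, ht, hst⟩ := (hC _).2.1 s hs; ⟨t, (hC _).1 t ht, hst, ht⟩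
  obtain ⟨ρ, rfl, hρ, hρC⟩ := exists_countable_chain step ha
  refine ⟨⋃ k, ρ k, mem_iInter.2 fun i => (hC i).iUnion_mem hρ ?_, subset_iUnion ρ 0⟩
  obtain ⟨j, rfl⟩ := hg i
  refine frequently_atTop.2 fun m =>
    ⟨Nat.pair j m + 1, (Nat.right_le_pair j m).trans (Nat.le_succ _), ?_⟩
  simpa using hρC (Nat.pair j m)

lemma isClubIn_diagonal {C : List κ → Set (Set κ)} (hC : ∀ p, IsClubIn (C p)) :
    IsClubIn {σ | ∀ p ∈ listsIn σ, σ ∈ C p} := by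
  refine ⟨fun σ hσ => (hC []).1 σ (hσ [] (nil_mem_listsIn σ)), fun a ha => ?_,
    fun s hs hmono p hp => (hC p).iUnion_mem hmono
      ((eventually_mem_listsIn hmono hp).mono fun n hn => hs n p hn).frequently⟩
  have step : ∀ (_ : ℕ) s, s.Countable →
      ∃ t, t.Countable ∧ s ⊆ t ∧ ∀ p ∈ listsIn s, t ∈ C p := by
    intro _ s hs
    have := hs.listsIn.to_subtype
    have : Nonempty (listsIn s) := ⟨⟨[], nil_mem_listsIn s⟩⟩
    have hCs := IsClubIn.iInter fun p : listsIn s => hC p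
    obtain ⟨t, ht, hst⟩ := hCs.2.1 s hs
    exact ⟨t, hCs.1 t ht, hst, fun p hp => mem_iInter.1 ht ⟨p, hp⟩⟩
  obtain ⟨ρ, rfl, hρ, hρC⟩ := exists_countable_chain step ha
  refine ⟨⋃ k, ρ k, fun p hp => (hC p).iUnion_mem hρ ?_, subset_iUnion ρ 0⟩
  have hshift : ∀ᶠ k in map (· + 1) atTop, ρ k ∈ C p :=
    (eventually_mem_listsIn hρ hp).mono fun k hk => hρC k p hk
  rw [map_add_atTop_eq_nat] at hshift
  exact hshift.frequently

lemma exists_isClubIn_subset_sInter {S : Set (Set (Set κ))} (hS : S.Countable)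
    (h : ∀ s ∈ S, ∃ C, IsClubIn C ∧ C ⊆ s) : ∃ C, IsClubIn C ∧ C ⊆ ⋂₀ S := by
  rcases S.eq_empty_or_nonempty with rfl | hne
  · exact ⟨_, isClubIn_countable, by simp⟩
  choose! C hC hCs using h
  have := hS.to_subtype
  have := hne.to_subtype
  exact ⟨⋂ s : S, C s, IsClubIn.iInter fun s => hC s s.2,
    fun σ hσ s hs => hCs s hs (mem_iInter.1 hσ ⟨s, hs⟩)⟩

def clubFilter (κ : Type*) : Filter (Set κ) :=
  ofCountableInter {S | ∃ C, IsClubIn C ∧ C ⊆ S} (fun _ => exists_isClubIn_subset_sInter)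
    fun _ _ ⟨C, hC, hCs⟩ hst => ⟨C, hC, hCs.trans hst⟩

instance : CountableInterFilter (clubFilter κ) := countableInter_ofCountableInter _ _ _

lemma eventually_clubFilter_iff {P : Set κ → Prop} :
    (∀ᶠ σ in clubFilter κ, P σ) ↔ ∃ C, IsClubIn C ∧ ∀ σ ∈ C, P σ :=
  Iff.rfl

lemma eventually_clubFilter_countable_superset {t : Set κ} (ht : t.Countable) :
    ∀ᶠ σ in clubFilter κ, σ.Countable ∧ t ⊆ σ := by
  refine eventually_clubFilter_iff.2 ⟨{σ | σ.Countable ∧ t ⊆ σ}, ⟨?_, ?_, ?_⟩, fun _ h => h⟩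
  · exact fun _ h => h.1
  · exact fun a ha => ⟨a ∪ t, ⟨ha.union ht, subset_union_right⟩, subset_union_left⟩
  · exact fun s hs _ => ⟨countable_iUnion fun n => (hs n).1, (hs 0).2.trans (subset_iUnion s 0)⟩

lemma eventually_clubFilter_forall_listsIn {P : List κ → Set κ → Prop}
    (h : ∀ p, ∀ᶠ σ in clubFilter κ, P p σ) : ∀ᶠ σ in clubFilter κ, ∀ p ∈ listsIn σ, P p σ := by
  choose C hC hCP using h
  exact ⟨_, isClubIn_diagonal hC, fun σ hσ p hp => hCP p (hσ p hp)⟩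

lemma mem_Np_seg (x : ℕ → κ) (n : ℕ) : x ∈ Np (seg x n) := fun i => by
  rw [List.get_eq_getElem]
  simp [seg]

lemma seg_eq_seg_iff_mem_cylinder {x y : ℕ → κ} {n : ℕ} :
    seg y n = seg x n ↔ y ∈ PiNat.cylinder x n := by
  simp [seg, List.ofFn_inj, funext_iff, PiNat.mem_cylinder_iff, Fin.forall_iff]

lemma exists_seg_eq_of_prefix {σ : Set κ} (x : SeqIn σ) {n : ℕ} {q : List κ}
    (hq : q ∈ listsIn σ) (hxq : seg x.1 n <+: q) :
    ∃ y : SeqIn σ, y.1 ∈ PiNat.cylinder x.1 n ∧ seg y.1 q.length = q := by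
  refine ⟨⟨fun i => q.getD i (x.1 i), fun i => ?_⟩, fun i hi => ?_, ?_⟩
  · show q.getD i (x.1 i) ∈ σ
    by_cases h : i < q.length
    · rw [List.getD_eq_getElem _ _ h]
      exact hq _ (List.getElem_mem h)
    · rw [List.getD_eq_default _ _ (not_lt.1 h)]
      exact x.2 i
  · show q.getD i (x.1 i) = x.1 i
    have hin : i < (seg x.1 n).length := by simpa [seg] using hi
    rw [List.getD_eq_getElem _ _ (hin.trans_le hxq.length_le), ← hxq.getElem hin]
    simp [seg]
  · refine List.ext_getElem (by simp [seg]) fun i _ h => ?_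
    simp [seg]

variable [TopologicalSpace κ] [DiscreteTopology κ]

lemma eventually_residual_exists_seg_mem {σ : Set κ} {D : Set (List κ)}
    (hD : ∀ p ∈ listsIn σ, ∃ q ∈ D ∩ listsIn σ, p <+: q) :
    ∀ᶠ x in residual (SeqIn σ), ∃ n, seg x.1 n ∈ D := by
  refine residual_of_dense_open (isOpen_iff_mem_nhds.2 fun x ⟨n, hn⟩ => ?_)
    fun x => mem_closure_iff_nhds.2 fun V hV => ?_
  · have hcyl : IsOpen (Subtype.val ⁻¹' PiNat.cylinder x.1 n : Set (SeqIn σ)) :=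
      (PiNat.isOpen_cylinder _ x.1 n).preimage continuous_subtype_val
    exact mem_of_superset (hcyl.mem_nhds (PiNat.self_mem_cylinder x.1 n))
      fun y hy => ⟨n, (seg_eq_seg_iff_mem_cylinder.2 hy).symm ▸ hn⟩
  · obtain ⟨W, hW, hWV⟩ := (mem_nhds_induced _ _ _).1 hV
    obtain ⟨_, ⟨z, n, rfl⟩, hxz, hzW⟩ := (PiNat.isTopologicalBasis_cylinders _).mem_nhds_iff.1 hW
    obtain ⟨q, ⟨hqD, hqσ⟩, hxq⟩ := hD _ (seg_mem_listsIn x n)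
    obtain ⟨y, hy, hyq⟩ := exists_seg_eq_of_prefix x hqσ hxq
    rw [PiNat.mem_cylinder_iff_eq] at hxz
    exact ⟨y, hWV (hzW (hxz ▸ hy)), q.length, by rwa [hyq]⟩

end

theorem weak_capturing_term_exists_general (κ : Type*) [TopologicalSpace κ]
    [DiscreteTopology κ] (A : Set (ℕ → ℕ))
    (h2 : ∀ f : (ℕ → κ) → (ℕ → ℕ), Continuous f →
      DenseCond {p : List κ |
        (∃ C : Set (Set κ), IsClubIn C ∧ ∀ σ ∈ C, MeagerBelowIn σ (f ⁻¹' A) p) ∨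
        (∃ C : Set (Set κ), IsClubIn C ∧ ∀ σ ∈ C, ComeagerBelowIn σ (f ⁻¹' A) p)})
    (f : (ℕ → κ) → ℕ → ℕ) (hf : Continuous f) :
    ∃ C : Set (Set κ), IsClubIn C ∧ ∀ σ ∈ C,
      IsMeagre {x : SeqIn σ | ¬ (f x.1 ∈ A ↔ ∃ n, ∃ C' : Set (Set κ), IsClubIn C' ∧
        ∀ σ' ∈ C', ComeagerBelowIn σ' (f ⁻¹' A) (seg x.1 n))} := by
  simp only [← eventually_clubFilter_iff] at h2 ⊢
  choose e he hext using h2 f hf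
  set B := f ⁻¹' A
  have hclub : ∀ p, ∀ᶠ σ in clubFilter κ, (σ.Countable ∧ {b | b ∈ e p} ⊆ σ) ∧
      ((∀ᶠ σ' in clubFilter κ, MeagerBelowIn σ' B p) → MeagerBelowIn σ B p) ∧
      ((∀ᶠ σ' in clubFilter κ, ComeagerBelowIn σ' B p) → ComeagerBelowIn σ B p) := fun p =>
    (eventually_clubFilter_countable_superset (List.finite_toSet (e p)).countable).and
      ((eventually_imp_distrib_left.2 id).and (eventually_imp_distrib_left.2 id))
  filter_upwards [eventually_clubFilter_forall_listsIn hclub] with σ hσ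
  have hdense := eventually_residual_exists_seg_mem (σ := σ) fun p hp =>
    ⟨e p, ⟨he p, (hσ p hp).1.2⟩, hext p⟩
  have hdecided : ∀ᶠ x in residual (SeqIn σ), ∀ p ∈ listsIn σ,
      ((∀ᶠ σ' in clubFilter κ, MeagerBelowIn σ' B p) → x.1 ∉ B ∩ Np p) ∧
      ((∀ᶠ σ' in clubFilter κ, ComeagerBelowIn σ' B p) → x.1 ∉ Np p \ B) :=
    (eventually_countable_ball (hσ [] (nil_mem_listsIn σ)).1.1.listsIn).2 fun p hp =>
      (eventually_imp_distrib_left.2 (hσ p hp).2.1).and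
        (eventually_imp_distrib_left.2 (hσ p hp).2.2)
  filter_upwards [hdense, hdecided] with x ⟨n, hn⟩ hx
  rw [mem_compl_iff, mem_ofPred_eq, not_not]
  refine ⟨fun hA => ?_, fun ⟨m, hm⟩ => ?_⟩
  · exact ⟨n, hn.resolve_left fun hM => (hx _ (seg_mem_listsIn x n)).1 hM ⟨hA, mem_Np_seg x.1 n⟩⟩
  · by_contra hA
    exact (hx _ (seg_mem_listsIn x m)).2 hm ⟨mem_Np_seg x.1 m, hA⟩

/-- If `A ⊆ ω^ω` is weakly captured at `κ` in the sense of clubs (condition (2): for every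
continuous `f : κ^ω → ω^ω` there is a dense set of conditions `p` below which `f ⁻¹' A` is
relatively meager on club many `σ`, or relatively comeager on club many `σ`), then `A`
admits a weak capturing term: taking `(p, τ) ∈ Ȧ` iff `f_τ ⁻¹' A ∩ σ^ω` is comeager below
`p` in `σ^ω` for a club of `σ`, for club many `σ` and comeager many `g ∈ σ^ω` the
evaluation computes `A` correctly: `f_τ(g) ∈ A` iff some initial segment `p` of `g` has
`(p, τ) ∈ Ȧ`.  (Here `f = f_τ` is the continuous evaluation of the term `τ`.) -/
theorem weak_capturing_term_exists (κ : Type*) [Infinite κ] [TopologicalSpace κ]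
    [DiscreteTopology κ] (A : Set (ℕ → ℕ))
    (h2 : ∀ f : (ℕ → κ) → (ℕ → ℕ), Continuous f →
      DenseCond {p : List κ |
        (∃ C : Set (Set κ), IsClubIn C ∧ ∀ σ ∈ C, MeagerBelowIn σ (f ⁻¹' A) p) ∨
        (∃ C : Set (Set κ), IsClubIn C ∧ ∀ σ ∈ C, ComeagerBelowIn σ (f ⁻¹' A) p)})
    (f : (ℕ → κ) → ℕ → ℕ) (hf : Continuous f) :
    ∃ C : Set (Set κ), IsClubIn C ∧ ∀ σ ∈ C,
      IsMeagre {x : SeqIn σ | ¬ (f x.1 ∈ A ↔ ∃ n, ∃ C' : Set (Set κ), IsClubIn C' ∧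
        ∀ σ' ∈ C', ComeagerBelowIn σ' (f ⁻¹' A) (seg x.1 n))} :=
  weak_capturing_term_exists_general κ A h2 f hf
end

section
/- Let δ be an ordinal, f : δ^{<ω} → δ, and γ a countable ordinal. Define the tree T of pairs (s, t) where s ∈ δ^{<ω}, t is a finite order-preserving injection from an initial segment of an enumeration of γ into ran(s)-closure data, such that ran(s) is 'f-closure consistent' (f applied to tuples from ran(s) that have been enumerated so far appears in ran(s) or is promised). Then T has an infinite branch if and only if there exists a countable σ ⊆ δ closed under f (f[σ^{<ω}] ⊆ σ) with order type otp(σ) = γ. -/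
open Set

/-- `σ` has order type `γ`: there is an order isomorphism from `Iio γ` onto `σ`. -/
def OrdType (σ : Set Ordinal) (γ : Ordinal) : Prop :=
  ∃ g : Ordinal → Ordinal, (∀ β < γ, g β ∈ σ) ∧
    (∀ β₁ < γ, ∀ β₂ < γ, β₁ < β₂ → g β₁ < g β₂) ∧
    ∀ a ∈ σ, ∃ β < γ, g β = a

/-- A node `(s, t)` of the tree `T` of finite approximations: `s` is a finite partial
enumeration of a subset of `δ` whose odd positions realize the `f`-closure promises coded
by the bookkeeping surjection `c : ℕ → List ℕ`, and `t` is (an interleaving of) a finite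
order-preserving map from `γ` (enumerated by `e`) into the entries of `s` (even positions
of `t`) together with a finite order-preserving map from the entries of `s` back into `γ`
(odd positions of `t`). -/
def TreeNode (δ γ : Ordinal) (f : List Ordinal → Ordinal) (e : ℕ → Ordinal)
    (c : ℕ → List ℕ) (st : List Ordinal × List Ordinal) : Prop :=
  (∀ a ∈ st.1, a < δ) ∧
  (∀ k : ℕ, 2 * k + 1 < st.1.length → (∀ i ∈ c k, i < 2 * k + 1) →
    st.1.getD (2 * k + 1) 0 = f ((c k).map fun i => st.1.getD i 0)) ∧
  st.2.length ≤ 2 * st.1.length ∧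
  (∀ i : ℕ, 2 * i < st.2.length → st.2.getD (2 * i) 0 ∈ st.1) ∧
  (∀ i j : ℕ, 2 * i < st.2.length → 2 * j < st.2.length →
    (e i < e j ↔ st.2.getD (2 * i) 0 < st.2.getD (2 * j) 0) ∧
    (e i = e j → st.2.getD (2 * i) 0 = st.2.getD (2 * j) 0)) ∧
  (∀ i : ℕ, 2 * i + 1 < st.2.length → st.2.getD (2 * i + 1) 0 < γ) ∧
  (∀ i j : ℕ, 2 * i + 1 < st.2.length → 2 * j + 1 < st.2.length →
    (st.1.getD i 0 < st.1.getD j 0 ↔ st.2.getD (2 * i + 1) 0 < st.2.getD (2 * j + 1) 0) ∧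
    (st.1.getD i 0 = st.1.getD j 0 → st.2.getD (2 * i + 1) 0 = st.2.getD (2 * j + 1) 0))

/-! A branch `(s, t)` yields `σ = ran s`. Every list of indices is coded by infinitely many `k`,
hence by one with `2 * k + 1` beyond all its entries, where `s` is forced to take the value of
`f`; so `σ` is closed under `f`. The even and odd halves of `t` are order embeddings `γ → σ`
and `σ → γ`, and mutual embeddings of well-orders are isomorphic. Conversely, an enumeration `g`
of `σ` in order type `γ` gives the branch `s = closureSeq f c (g ∘ e)` and `t` interleaving
`g ∘ e` with `g⁻¹ ∘ s`. -/

lemma List.getD_ofFn_of_lt {α : Type*} (s : ℕ → α) (d : α) {n j : ℕ} (h : j < n) :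
    (List.ofFn fun i : Fin n => s i.1).getD j d = s j := by
  simp [List.getD_eq_getElem?_getD, h]

lemma List.mem_ofFn_iff_exists_lt {α : Type*} (s : ℕ → α) (n : ℕ) (a : α) :
    a ∈ (List.ofFn fun i : Fin n => s i.1) ↔ ∃ j < n, s j = a := by
  simp [List.mem_ofFn, Fin.exists_iff]

lemma List.exists_map_eq_of_forall_mem_range {α β : Type*} (s : α → β) :
    ∀ l : List β, (∀ b ∈ l, b ∈ Set.range s) → ∃ idx : List α, idx.map s = l
  | [], _ => ⟨[], rfl⟩
  | b :: l, h => by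
    obtain ⟨i, rfl⟩ := h b List.mem_cons_self
    obtain ⟨idx, rfl⟩ :=
      exists_map_eq_of_forall_mem_range s l fun b hb => h b (List.mem_cons_of_mem _ hb)
    exact ⟨i :: idx, rfl⟩

theorem ordType_of_orderIso {σ : Set Ordinal} {γ : Ordinal} (φ : Iio γ ≃o σ) : OrdType σ γ := by
  classical
  refine ⟨fun β => if h : β < γ then φ ⟨β, h⟩ else 0, fun β hβ => by simp [hβ],
    fun β₁ h₁ β₂ h₂ h => by simpa [h₁, h₂] using φ.strictMono (a := ⟨β₁, h₁⟩) (b := ⟨β₂, h₂⟩) h,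
    fun a ha => ?_⟩
  obtain ⟨⟨β, hβ⟩, hφ⟩ := φ.surjective ⟨a, ha⟩
  exact ⟨β, hβ, by simp [hβ.out, hφ]⟩

theorem ordType_of_strictMono {σ : Set Ordinal} {γ : Ordinal} {F : Iio γ → σ} (hF : StrictMono F)
    {G : σ → Iio γ} (hG : StrictMono G) : OrdType σ γ :=
  ordType_of_orderIso <| OrderIso.ofRelIsoLT <| InitialSeg.antisymm
    (OrderEmbedding.ofStrictMono F hF).ltEmbedding.collapse
    (OrderEmbedding.ofStrictMono G hG).ltEmbedding.collapse

section ClosureSeq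

variable {α : Type*} (f : List α → α) (c : ℕ → List ℕ) (u : ℕ → α)

noncomputable def closureSeq (n : ℕ) : α :=
  if n % 2 = 0 then u (n / 2)
  else if h : ∀ i ∈ c (n / 2), i < n then
    f ((c (n / 2)).pmap (fun i _ => closureSeq i) h)
  else u 0
termination_by n
decreasing_by assumption

theorem closureSeq_two_mul (k : ℕ) : closureSeq f c u (2 * k) = u k := by
  rw [closureSeq, if_pos (by omega), Nat.mul_div_cancel_left k two_pos]

theorem closureSeq_two_mul_add_one {k : ℕ} (h : ∀ i ∈ c k, i < 2 * k + 1) :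
    closureSeq f c u (2 * k + 1) = f ((c k).map (closureSeq f c u)) := by
  have hk : (2 * k + 1) / 2 = k := by omega
  rw [closureSeq, if_neg (by omega), dif_pos (by rwa [hk]), List.pmap_eq_map, hk]

theorem closureSeq_mem {σ : Set α} (hu : ∀ n, u n ∈ σ)
    (hσ : ∀ l : List α, (∀ b ∈ l, b ∈ σ) → f l ∈ σ) (n : ℕ) : closureSeq f c u n ∈ σ := by
  induction n using Nat.strong_induction_on with
  | _ n ih =>
    rw [closureSeq]
    split_ifs with _ hlt
    · exact hu _
    · exact hσ _ fun b hb => by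
        obtain ⟨i, hi, rfl⟩ := List.mem_pmap.1 hb
        exact ih i (hlt i hi)
    · exact hu 0

end ClosureSeq

def interleave {α : Type*} (a b : ℕ → α) (n : ℕ) : α :=
  if n % 2 = 0 then a (n / 2) else b (n / 2)

@[simp]
theorem interleave_two_mul {α : Type*} (a b : ℕ → α) (k : ℕ) : interleave a b (2 * k) = a k := by
  simp [interleave]

@[simp]
theorem interleave_two_mul_add_one {α : Type*} (a b : ℕ → α) (k : ℕ) :
    interleave a b (2 * k + 1) = b k := by
  simp [interleave, Nat.add_mod, Nat.add_div]

structure IsBranch (δ γ : Ordinal) (f : List Ordinal → Ordinal) (e : ℕ → Ordinal)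
    (c : ℕ → List ℕ) (s t : ℕ → Ordinal) : Prop where
  s_lt : ∀ i, s i < δ
  s_odd : ∀ k, (∀ i ∈ c k, i < 2 * k + 1) → s (2 * k + 1) = f ((c k).map s)
  t_even_mem : ∀ i, ∃ j < 2 * i + 1, s j = t (2 * i)
  t_even_lt_iff : ∀ i j, e i < e j ↔ t (2 * i) < t (2 * j)
  t_even_congr : ∀ i j, e i = e j → t (2 * i) = t (2 * j)
  t_odd_lt : ∀ i, t (2 * i + 1) < γ
  t_odd_lt_iff : ∀ i j, s i < s j ↔ t (2 * i + 1) < t (2 * j + 1)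
  t_odd_congr : ∀ i j, s i = s j → t (2 * i + 1) = t (2 * j + 1)

section Branch

variable {δ γ : Ordinal} {f : List Ordinal → Ordinal} {e : ℕ → Ordinal} {c : ℕ → List ℕ}
  {s t : ℕ → Ordinal}

theorem isBranch_of_forall_treeNode (H : ∀ n, TreeNode δ γ f e c
      (List.ofFn fun i : Fin n => s i.1, List.ofFn fun i : Fin n => t i.1)) :
    IsBranch δ γ f e c s t := by
  have s_odd k (hk : ∀ i ∈ c k, i < 2 * k + 1) : s (2 * k + 1) = f ((c k).map s) := by
    rw [← List.getD_ofFn_of_lt s 0 (n := 2 * k + 2) (by omega), (H _).2.1 k (by simp) hk]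
    congr 1
    refine List.map_congr_left fun i hi => List.getD_ofFn_of_lt _ _ ?_
    have := hk i hi
    omega
  have t_even_mem i := (H (2 * i + 1)).2.2.2.1 i (by simp)
  have t_even i j := (H (2 * i + 2 * j + 1)).2.2.2.2.1 i j (by simp) (by simp)
  have t_odd_lt i := (H (2 * i + 2)).2.2.2.2.2.1 i (by simp)
  have t_odd i j := (H (2 * i + 2 * j + 2)).2.2.2.2.2.2 i j (by simp) (by simp)
  simp (disch := omega) only [List.getD_ofFn_of_lt, List.mem_ofFn_iff_exists_lt]
    at t_even_mem t_even t_odd_lt t_odd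
  exact ⟨fun i => (H (i + 1)).1 _ ((List.mem_ofFn_iff_exists_lt s _ _).2 ⟨i, by omega, rfl⟩),
    s_odd, t_even_mem, fun i j => (t_even i j).1, fun i j => (t_even i j).2, t_odd_lt,
    fun i j => (t_odd i j).1, fun i j => (t_odd i j).2⟩

theorem IsBranch.treeNode (hb : IsBranch δ γ f e c s t) (n : ℕ) :
    TreeNode δ γ f e c (List.ofFn fun i : Fin n => s i.1, List.ofFn fun i : Fin n => t i.1) := by
  simp only [TreeNode, List.length_ofFn]
  refine ⟨?_, fun k hk hck => ?_, by omega, fun i hi => ?_, fun i j hi hj => ?_, fun i hi => ?_,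
    fun i j hi hj => ?_⟩
  · simpa [List.mem_ofFn_iff_exists_lt] using fun j _ => hb.s_lt j
  · rw [List.getD_ofFn_of_lt _ _ hk, hb.s_odd k hck]
    congr 1
    refine (List.map_congr_left fun i hi => List.getD_ofFn_of_lt _ _ ?_).symm
    have := hck i hi
    omega
  · obtain ⟨j, hj, hsj⟩ := hb.t_even_mem i
    simp (disch := omega) only [List.getD_ofFn_of_lt, List.mem_ofFn_iff_exists_lt]
    exact ⟨j, by omega, hsj⟩
  · simp (disch := omega) only [List.getD_ofFn_of_lt]
    exact ⟨hb.t_even_lt_iff i j, hb.t_even_congr i j⟩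
  · simp (disch := omega) only [List.getD_ofFn_of_lt]
    exact hb.t_odd_lt i
  · simp (disch := omega) only [List.getD_ofFn_of_lt]
    exact ⟨hb.t_odd_lt_iff i j, hb.t_odd_congr i j⟩

theorem forall_treeNode_ofFn_iff_isBranch :
    (∀ n, TreeNode δ γ f e c
      (List.ofFn fun i : Fin n => s i.1, List.ofFn fun i : Fin n => t i.1)) ↔
      IsBranch δ γ f e c s t :=
  ⟨isBranch_of_forall_treeNode, IsBranch.treeNode⟩

theorem IsBranch.range_closed (hb : IsBranch δ γ f e c s t)
    (hc : ∀ l : List ℕ, {k | c k = l}.Infinite) (l : List Ordinal) (hl : ∀ b ∈ l, b ∈ range s) :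
    f l ∈ range s := by
  obtain ⟨idx, rfl⟩ := List.exists_map_eq_of_forall_mem_range s l hl
  obtain ⟨k, hk, hsum⟩ := (hc idx).exists_gt idx.sum
  have hk : c k = idx := hk
  have hlt : ∀ i ∈ c k, i < 2 * k + 1 := fun i hi => by
    have := List.le_sum_of_mem (hk ▸ hi)
    omega
  exact ⟨2 * k + 1, by rw [hb.s_odd k hlt, hk]⟩

theorem IsBranch.ordType_range (hb : IsBranch δ γ f e c s t) (he : ∀ β < γ, ∃ n, e n = β) :
    OrdType (range s) γ := by
  choose n hn using fun β : Iio γ => he β β.2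
  refine ordType_of_strictMono (F := fun β => ⟨t (2 * n β), ?_⟩)
    (G := fun a => ⟨t (2 * rangeSplitting s a + 1), hb.t_odd_lt _⟩) ?_ ?_
  · obtain ⟨j, -, hj⟩ := hb.t_even_mem (n β)
    exact ⟨j, hj⟩
  · intro β β' h
    exact (hb.t_even_lt_iff _ _).1 (by rwa [hn, hn])
  · intro a a' h
    refine (hb.t_odd_lt_iff _ _).1 ?_
    rwa [apply_rangeSplitting s a, apply_rangeSplitting s a']

theorem exists_isBranch_of_ordType {σ : Set Ordinal} (he : ∀ n, e n < γ) (hσ : σ ⊆ Iio δ)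
    (hf : ∀ l : List Ordinal, (∀ b ∈ l, b ∈ σ) → f l ∈ σ) (hot : OrdType σ γ) :
    ∃ s t, IsBranch δ γ f e c s t := by
  obtain ⟨g, hg_mem, hg_mono, hg_surj⟩ := hot
  have hg : StrictMonoOn g (Iio γ) := hg_mono
  let s := closureSeq f c (fun n => g (e n))
  have hs : ∀ n, s n ∈ σ := closureSeq_mem f c _ (fun n => hg_mem _ (he n)) hf
  let g' := Function.invFunOn g (Iio γ)
  have hg' : ∀ n, g' (s n) < γ ∧ g (g' (s n)) = s n :=
    fun n => Function.invFunOn_pos (hg_surj _ (hs n))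
  refine ⟨s, interleave (fun n => g (e n)) (fun n => g' (s n)),
    { s_lt := fun i => hσ (hs i)
      s_odd := fun k => closureSeq_two_mul_add_one f c _
      t_even_mem := fun i => ⟨2 * i, by omega, by simp [s, closureSeq_two_mul]⟩
      t_even_lt_iff := fun i j => by simpa using (hg.lt_iff_lt (he i) (he j)).symm
      t_even_congr := fun i j h => by simp [h]
      t_odd_lt := fun i => by simpa using (hg' i).1
      t_odd_lt_iff := fun i j => ?_
      t_odd_congr := fun i j h => by simp [h] }⟩
  simp only [interleave_two_mul_add_one]
  conv_lhs => rw [← (hg' i).2, ← (hg' j).2]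
  exact hg.lt_iff_lt (hg' i).1 (hg' j).1

end Branch

theorem tree_branch_iff_closed_subset_general (δ γ : Ordinal)
    (f : List Ordinal → Ordinal)
    (e : ℕ → Ordinal) (he1 : ∀ n, e n < γ) (he2 : ∀ β < γ, ∃ n, e n = β)
    (c : ℕ → List ℕ) (hc : ∀ l : List ℕ, {k | c k = l}.Infinite) :
    (∃ s t : ℕ → Ordinal, ∀ n : ℕ,
        TreeNode δ γ f e c
          (List.ofFn fun i : Fin n => s i.1, List.ofFn fun i : Fin n => t i.1)) ↔
      ∃ σ : Set Ordinal, σ.Countable ∧ σ ⊆ Set.Iio δ ∧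
        (∀ l : List Ordinal, (∀ b ∈ l, b ∈ σ) → f l ∈ σ) ∧ OrdType σ γ := by
  simp only [forall_treeNode_ofFn_iff_isBranch]
  constructor
  · rintro ⟨s, t, hb⟩
    exact ⟨range s, countable_range s, range_subset_iff.2 hb.s_lt, hb.range_closed hc,
      hb.ordType_range he2⟩
  · rintro ⟨σ, -, hσ, hf, hot⟩
    exact exists_isBranch_of_ordType he1 hσ hf hot

/-- Let `δ` be an ordinal, `f : δ^{<ω} → δ`, and `γ` a nonzero countable ordinal
enumerated by `e : ω → γ`; let `c : ℕ → List ℕ` be a bookkeeping surjection with infinite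
fibers.  The tree `T` of finite approximations `(s, t)` (ordered by coordinatewise
extension) has an infinite branch if and only if there is a countable `σ ⊆ δ` closed under
`f` (i.e. `f[σ^{<ω}] ⊆ σ`) with order type `otp(σ) = γ`. -/
theorem tree_branch_iff_closed_subset (δ γ : Ordinal) (hγ : 0 < γ) (hγc : γ.card ≤ ℵ₀)
    (f : List Ordinal → Ordinal) (hf : ∀ l : List Ordinal, (∀ b ∈ l, b < δ) → f l < δ)
    (e : ℕ → Ordinal) (he1 : ∀ n, e n < γ) (he2 : ∀ β < γ, ∃ n, e n = β)
    (c : ℕ → List ℕ) (hc : ∀ l : List ℕ, {k | c k = l}.Infinite) :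
    (∃ s t : ℕ → Ordinal, ∀ n : ℕ,
        TreeNode δ γ f e c
          (List.ofFn fun i : Fin n => s i.1, List.ofFn fun i : Fin n => t i.1)) ↔
      ∃ σ : Set Ordinal, σ.Countable ∧ σ ⊆ Set.Iio δ ∧
        (∀ l : List Ordinal, (∀ b ∈ l, b ∈ σ) → f l ∈ σ) ∧ OrdType σ γ :=
  tree_branch_iff_closed_subset_general δ γ f e he1 he2 c hc
end
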